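/- Let f = f_μ, let Z ∈ ℝ^{m×n}, let δ ∈ [0,1), and define C_Z(X) = R(X) + ‖X − Z‖_F². If X̄ minimizes C_Z over { X : rank(X) ≤ k } with rank(X̄) < k, and no singular value of Z lies in the interval [(1−δ)√μ, √μ/(1−δ)], then X̄ minimizes C_Z over all of ℝ^{m×n}. -/

import Mathlib

noncomputable section
open Matrix Real

/-- The singular values of a real `m × n` matrix, in descending order,
indexed by `Fin (min m n)`: square roots of the eigenvalues of `Xᴴ * X`. -/
def sVal {m n : ℕ} (X : Matrix (Fin m) (Fin n) ℝ) (i : Fin (min m n)) : ℝ :=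
  Real.sqrt ((Matrix.isHermitian_conjTranspose_mul_self X).eigenvalues
    (Tuple.sort (fun j => -(Matrix.isHermitian_conjTranspose_mul_self X).eigenvalues j)
      (Fin.castLE (Nat.min_le_right m n) i)))

def regR {m n : ℕ} (f : ℝ → ℝ) (X : Matrix (Fin m) (Fin n) ℝ) : ℝ :=
  ∑ i, f (sVal X i)

def colNormSq {m k : ℕ} (B : Matrix (Fin m) (Fin k) ℝ) (i : Fin k) : ℝ :=
  ∑ j, (B j i) ^ 2

def colNorm {m k : ℕ} (B : Matrix (Fin m) (Fin k) ℝ) (i : Fin k) : ℝ :=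
  Real.sqrt (colNormSq B i)

def Rt {m n k : ℕ} (f : ℝ → ℝ) (B : Matrix (Fin m) (Fin k) ℝ)
    (C : Matrix (Fin n) (Fin k) ℝ) : ℝ :=
  ∑ i, f ((colNormSq B i + colNormSq C i) / 2)

/-- Frobenius inner product `⟨X,Y⟩ = tr(XᵀY)`. -/
def frobInner {m n : ℕ} (X Y : Matrix (Fin m) (Fin n) ℝ) : ℝ :=
  (Xᵀ * Y).trace

def frobSq {m n : ℕ} (X : Matrix (Fin m) (Fin n) ℝ) : ℝ :=
  (Xᵀ * X).trace

def fmu (μ x : ℝ) : ℝ := μ - max (Real.sqrt μ - x) 0 ^ 2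

/-!
Let `λ` be the eigenvalues of `Zᵀ Z` and `C = C_Z`. For every `X` and every threshold `θ ≥ μ`,
`C X ≥ ∑ λ - rank X * (θ - μ) - ∑ (λ - θ)₊`: in an eigenbasis of `Xᵀ X` the cost splits into
one-dimensional problems, one per column, each bounded below by the envelope inequality
`fmu μ a + (a - b)² ≥ min (b², μ)`, and the squared column norms of `Z` in that basis are
majorized by `λ`. Conversely, projecting `Z` onto any `s` eigendirections of `Zᵀ Z` gives a
matrix of rank `≤ s` and cost `≤ μ s + ∑` of the remaining eigenvalues.

If at most `rank X̄` eigenvalues exceed `μ`, projecting onto their eigendirections attains the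
bound for `θ = μ`, so this matrix, and with it `X̄`, is a global minimizer. Otherwise, project
onto the top `rank X̄ + 1` eigendirections and take for `θ > μ` the smallest of their
eigenvalues: the bound shows that this matrix of rank `≤ k` beats `X̄`, which is impossible.
-/

open Finset

lemma fmu_zero {μ : ℝ} (hμ : 0 ≤ μ) : fmu μ 0 = 0 := by
  simp [fmu, Real.sq_sqrt hμ]

lemma fmu_le (μ x : ℝ) : fmu μ x ≤ μ := by
  unfold fmu
  nlinarith [sq_nonneg (max (√μ - x) 0)]

/-- `fmu μ` is the quadratic envelope of `μ * [x ≠ 0]`, so it does not lower the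
one-dimensional hard-thresholding value `min (b ^ 2) μ`. -/
lemma min_sq_le_fmu_add_sq_sub {μ a b : ℝ} (hμ : 0 ≤ μ) (ha : 0 ≤ a) :
    min (b ^ 2) μ ≤ fmu μ a + (a - b) ^ 2 := by
  have hs : √μ ^ 2 = μ := Real.sq_sqrt hμ
  rcases le_or_gt √μ a with h | h
  · have : fmu μ a = μ := by simp [fmu, h]
    nlinarith [min_le_right (b ^ 2) μ]
  · have : fmu μ a = 2 * √μ * a - a ^ 2 := by
      rw [fmu, max_eq_left (by linarith)]; nlinarith
    rcases le_or_gt b √μ with h' | h'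
    · nlinarith [min_le_left (b ^ 2) μ]
    · nlinarith [min_le_right (b ^ 2) μ]

lemma neg_le_fmu_add_sq_sub_two_mul_mul {μ θ a b : ℝ} (hμ : 0 ≤ μ) (hθ : μ ≤ θ)
    (ha : 0 ≤ a) :
    -((if a = 0 then 0 else θ - μ) + max (b ^ 2 - θ) 0) ≤ fmu μ a + a ^ 2 - 2 * a * b := by
  split_ifs with h0
  · simp [h0, fmu_zero hμ]
  · have := min_sq_le_fmu_add_sq_sub (b := b) hμ ha
    have : b ^ 2 - θ ≤ max (b ^ 2 - θ) 0 := le_max_left _ _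
    rcases min_cases (b ^ 2) μ with ⟨h, -⟩ | ⟨h, -⟩ <;>
      nlinarith [le_max_right (b ^ 2 - θ) 0]

section Frobenius

variable {m n : ℕ}

lemma colNormSq_eq_transpose_mul_self (M : Matrix (Fin m) (Fin n) ℝ) (j : Fin n) :
    colNormSq M j = (Mᵀ * M) j j := by
  simp [colNormSq, Matrix.mul_apply, sq]

lemma frobSq_eq_sum_colNormSq (M : Matrix (Fin m) (Fin n) ℝ) : frobSq M = ∑ j, colNormSq M j := by
  simp [frobSq, trace, colNormSq_eq_transpose_mul_self]

lemma frobSq_sub (X Y : Matrix (Fin m) (Fin n) ℝ) :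
    frobSq (X - Y) = frobSq X - 2 * frobInner X Y + frobSq Y := by
  have : (Yᵀ * X).trace = (Xᵀ * Y).trace := by
    rw [← trace_transpose, transpose_mul, transpose_transpose]
  simp only [frobSq, frobInner, transpose_sub, Matrix.sub_mul, Matrix.mul_sub, trace_sub, this]
  ring

lemma frobInner_mul_mul {V : Matrix (Fin n) (Fin n) ℝ} (hV : V * Vᵀ = 1)
    (X Y : Matrix (Fin m) (Fin n) ℝ) : frobInner (X * V) (Y * V) = frobInner X Y := by
  rw [frobInner, frobInner, transpose_mul, Matrix.mul_assoc, trace_mul_comm,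
    ← Matrix.mul_assoc, Matrix.mul_assoc _ V, hV, Matrix.mul_one]

lemma frobInner_le_sum_colNorm_mul_colNorm (X Y : Matrix (Fin m) (Fin n) ℝ) :
    frobInner X Y ≤ ∑ j, colNorm X j * colNorm Y j := by
  rw [frobInner, trace]
  refine sum_le_sum fun j _ => ?_
  simpa [Matrix.mul_apply, colNorm, colNormSq] using
    Real.sum_mul_le_sqrt_mul_sqrt univ (fun i => X i j) (fun i => Y i j)

lemma colNormSq_mul_of_transpose_mul_self_eq_diagonal {M : Matrix (Fin m) (Fin n) ℝ}
    {d : Fin n → ℝ} (hM : Mᵀ * M = diagonal d) (O : Matrix (Fin n) (Fin n) ℝ) (j : Fin n) :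
    colNormSq (M * O) j = ∑ i, O i j ^ 2 * d i := by
  have : (M * O)ᵀ * (M * O) = Oᵀ * diagonal d * O := by
    rw [transpose_mul, Matrix.mul_assoc, ← Matrix.mul_assoc Mᵀ, hM, Matrix.mul_assoc]
  rw [colNormSq_eq_transpose_mul_self, this]
  simp only [Matrix.mul_apply, transpose_apply, diagonal_apply, mul_ite, mul_zero, sum_ite_eq',
    mem_univ, if_true, sq]
  exact sum_congr rfl fun i _ => by ring

end Frobenius

lemma transpose_mul_self_of_mem_unitaryGroup {ι : Type*} [Fintype ι] [DecidableEq ι]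
    {U : Matrix ι ι ℝ} (hU : U ∈ unitaryGroup ι ℝ) : Uᵀ * U = 1 := by
  simpa [star_eq_conjTranspose] using (mem_unitaryGroup_iff'.1 hU)

lemma mul_transpose_self_of_mem_unitaryGroup {ι : Type*} [Fintype ι] [DecidableEq ι]
    {U : Matrix ι ι ℝ} (hU : U ∈ unitaryGroup ι ℝ) : U * Uᵀ = 1 := by
  simpa [star_eq_conjTranspose] using (mem_unitaryGroup_iff.1 hU)

lemma map_sq_mem_doublyStochastic {ι : Type*} [Fintype ι] [DecidableEq ι]
    {U : Matrix ι ι ℝ} (hU : U ∈ unitaryGroup ι ℝ) : U.map (· ^ 2) ∈ doublyStochastic ℝ ι := by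
  refine mem_doublyStochastic_iff_sum.2 ⟨fun i j => sq_nonneg _, fun i => ?_, fun j => ?_⟩
  · simpa [Matrix.mul_apply, one_apply, sq] using
      congrFun (congrFun (mul_transpose_self_of_mem_unitaryGroup hU) i) i
  · simpa [Matrix.mul_apply, one_apply, sq] using
      congrFun (congrFun (transpose_mul_self_of_mem_unitaryGroup hU) j) j

lemma sum_convexOn_sum_mul_le_of_mem_doublyStochastic {ι : Type*} [Fintype ι] [DecidableEq ι]
    {φ : ℝ → ℝ} (hφ : ConvexOn ℝ Set.univ φ) {M : Matrix ι ι ℝ}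
    (hM : M ∈ doublyStochastic ℝ ι) (x : ι → ℝ) :
    ∑ j, φ (∑ i, M i j * x i) ≤ ∑ i, φ (x i) :=
  calc ∑ j, φ (∑ i, M i j * x i)
      ≤ ∑ j, ∑ i, M i j * φ (x i) := sum_le_sum fun j _ =>
        hφ.map_sum_le (fun i _ => nonneg_of_mem_doublyStochastic hM)
          (sum_col_of_mem_doublyStochastic hM j) (fun _ _ => Set.mem_univ _)
    _ = ∑ i, φ (x i) := by
        rw [sum_comm]
        simp [← sum_mul, sum_row_of_mem_doublyStochastic hM]

section Gram

variable {m n : ℕ}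

/-- The squared singular values of `X`, padded with zeros to length `n` and in no particular
order (`sVal` sorts them). -/
abbrev gramEigenvalues (X : Matrix (Fin m) (Fin n) ℝ) : Fin n → ℝ :=
  (isHermitian_conjTranspose_mul_self X).eigenvalues

abbrev gramEigenvectors (X : Matrix (Fin m) (Fin n) ℝ) : Matrix (Fin n) (Fin n) ℝ :=
  (isHermitian_conjTranspose_mul_self X).eigenvectorUnitary

lemma gramEigenvectors_mem_unitaryGroup (X : Matrix (Fin m) (Fin n) ℝ) :
    gramEigenvectors X ∈ unitaryGroup (Fin n) ℝ :=
  Subtype.prop _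

lemma transpose_mul_self_mul_gramEigenvectors (X : Matrix (Fin m) (Fin n) ℝ) :
    (X * gramEigenvectors X)ᵀ * (X * gramEigenvectors X) = diagonal (gramEigenvalues X) := by
  have h := (isHermitian_conjTranspose_mul_self X).conjStarAlgAut_star_eigenvectorUnitary
  rw [Unitary.conjStarAlgAut_apply, Unitary.coe_star, star_star, star_eq_conjTranspose,
    conjTranspose_eq_transpose_of_trivial] at h
  rwa [transpose_mul, Matrix.mul_assoc, ← Matrix.mul_assoc Xᵀ,
    ← conjTranspose_eq_transpose_of_trivial X, ← Matrix.mul_assoc]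

lemma colNormSq_mul_gramEigenvectors (X : Matrix (Fin m) (Fin n) ℝ) (j : Fin n) :
    colNormSq (X * gramEigenvectors X) j = gramEigenvalues X j := by
  rw [colNormSq_eq_transpose_mul_self, transpose_mul_self_mul_gramEigenvectors, diagonal_apply_eq]

lemma frobSq_eq_sum_gramEigenvalues (X : Matrix (Fin m) (Fin n) ℝ) :
    frobSq X = ∑ j, gramEigenvalues X j := by
  rw [frobSq, ← conjTranspose_eq_transpose_of_trivial]
  exact (isHermitian_conjTranspose_mul_self X).trace_eq_sum_eigenvalues

lemma gramEigenvalues_nonneg (X : Matrix (Fin m) (Fin n) ℝ) (j : Fin n) :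
    0 ≤ gramEigenvalues X j :=
  (posSemidef_conjTranspose_mul_self X).eigenvalues_nonneg j

lemma card_gramEigenvalues_ne_zero (X : Matrix (Fin m) (Fin n) ℝ) :
    #{j | gramEigenvalues X j ≠ 0} = X.rank := by
  rw [← rank_conjTranspose_mul_self,
    (isHermitian_conjTranspose_mul_self X).rank_eq_card_non_zero_eigs, Fintype.card_subtype]

lemma gramEigenvalues_sort_eq_zero (X : Matrix (Fin m) (Fin n) ℝ) {j : Fin n}
    (hj : X.rank ≤ j) :
    gramEigenvalues X (Tuple.sort (fun i => -gramEigenvalues X i) j) = 0 := by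
  set e := gramEigenvalues X
  set σ := Tuple.sort (fun i => -e i)
  by_contra h
  have hpos : 0 < e (σ j) := (gramEigenvalues_nonneg X _).lt_of_ne' h
  have hanti : Monotone ((fun i => -e i) ∘ σ) := Tuple.monotone_sort _
  have hsub : (Iic j).image σ ⊆ ({i | e i ≠ 0} : Finset (Fin n)) := by
    intro x hx
    obtain ⟨i, hi, rfl⟩ := mem_image.1 hx
    have : -e (σ i) ≤ -e (σ j) := hanti (mem_Iic.1 hi)
    simp only [mem_filter, mem_univ, true_and]
    linarith
  have := card_le_card hsub
  rw [card_image_of_injective _ σ.injective, Fin.card_Iic, card_gramEigenvalues_ne_zero] at this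
  omega

lemma regR_eq_sum_sqrt_gramEigenvalues {f : ℝ → ℝ} (hf : f 0 = 0)
    (X : Matrix (Fin m) (Fin n) ℝ) :
    regR f X = ∑ j, f √(gramEigenvalues X j) := by
  set σ := Tuple.sort (fun i => -gramEigenvalues X i)
  rw [← Equiv.sum_comp σ, regR]
  have hmap : ∑ i : Fin (min m n), f (sVal X i) =
      ∑ j ∈ univ.map (Fin.castLEEmb (Nat.min_le_right m n)), f √(gramEigenvalues X (σ j)) := by
    rw [sum_map]
    rfl
  rw [hmap]
  refine sum_subset (subset_univ _) fun j _ hj => ?_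
  have hjmin : min m n ≤ j := by
    by_contra! hlt
    exact hj (mem_map.2 ⟨⟨j, hlt⟩, mem_univ _, rfl⟩)
  have hrank : X.rank ≤ min m n :=
    le_min (by simpa using X.rank_le_card_height) (by simpa using X.rank_le_card_width)
  rw [gramEigenvalues_sort_eq_zero X (hrank.trans hjmin), Real.sqrt_zero, hf]

lemma regR_le_mul_rank {f : ℝ → ℝ} {c : ℝ} (hf0 : f 0 = 0) (hf : ∀ x, f x ≤ c)
    (X : Matrix (Fin m) (Fin n) ℝ) : regR f X ≤ c * X.rank := by
  calc regR f X = ∑ j, f √(gramEigenvalues X j) := regR_eq_sum_sqrt_gramEigenvalues hf0 X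
    _ ≤ ∑ j, if gramEigenvalues X j = 0 then 0 else c := sum_le_sum fun j _ => by
        split_ifs with h
        · rw [h, Real.sqrt_zero, hf0]
        · exact hf _
    _ = c * X.rank := by
        rw [sum_ite, sum_const_zero, zero_add, sum_const, card_gramEigenvalues_ne_zero,
          nsmul_eq_mul, mul_comm]

/-- The squared entries of `Wᵀ * V`, where `W` diagonalizes `Zᵀ * Z`, form a doubly stochastic
matrix carrying the eigenvalues of `Zᵀ * Z` to the squared column norms of `Z * V`. -/
lemma sum_convexOn_colNormSq_mul_le {φ : ℝ → ℝ} (hφ : ConvexOn ℝ Set.univ φ)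
    (Z : Matrix (Fin m) (Fin n) ℝ) {V : Matrix (Fin n) (Fin n) ℝ}
    (hV : V ∈ unitaryGroup (Fin n) ℝ) :
    ∑ j, φ (colNormSq (Z * V) j) ≤ ∑ i, φ (gramEigenvalues Z i) := by
  have hW := gramEigenvectors_mem_unitaryGroup Z
  have hO : (gramEigenvectors Z)ᵀ * V ∈ unitaryGroup (Fin n) ℝ := by
    simpa [star_eq_conjTranspose] using mul_mem (Unitary.star_mem hW) hV
  have hZV : Z * V = Z * gramEigenvectors Z * ((gramEigenvectors Z)ᵀ * V) := by
    rw [Matrix.mul_assoc, ← Matrix.mul_assoc (gramEigenvectors Z),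
      mul_transpose_self_of_mem_unitaryGroup hW, Matrix.one_mul]
  simp only [hZV, colNormSq_mul_of_transpose_mul_self_eq_diagonal
    (transpose_mul_self_mul_gramEigenvectors Z)]
  exact sum_convexOn_sum_mul_le_of_mem_doublyStochastic hφ (map_sq_mem_doublyStochastic hO) _

end Gram

section Cost

variable {m n : ℕ}

theorem sum_sub_sub_le_regR_fmu_add_frobSq_sub {μ θ : ℝ} (hμ : 0 ≤ μ) (hθ : μ ≤ θ)
    (Z X : Matrix (Fin m) (Fin n) ℝ) :
    ∑ i, gramEigenvalues Z i - X.rank * (θ - μ) - ∑ i, max (gramEigenvalues Z i - θ) 0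
      ≤ regR (fmu μ) X + frobSq (X - Z) := by
  have hV := gramEigenvectors_mem_unitaryGroup X
  set a := colNorm (X * gramEigenvectors X)
  set b := colNorm (Z * gramEigenvectors X)
  have ha : ∀ j, a j = √(gramEigenvalues X j) := fun j => by
    simp only [a, colNorm, colNormSq_mul_gramEigenvectors]
  have hb : ∀ j, b j ^ 2 = colNormSq (Z * gramEigenvectors X) j := fun j =>
    Real.sq_sqrt (sum_nonneg fun _ _ => sq_nonneg _)
  have hcost : ∑ j, (fmu μ (a j) + a j ^ 2 - 2 * a j * b j) + ∑ i, gramEigenvalues Z i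
      ≤ regR (fmu μ) X + frobSq (X - Z) := by
    have hinner : frobInner X Z ≤ ∑ j, a j * b j := by
      rw [← frobInner_mul_mul (mul_transpose_self_of_mem_unitaryGroup hV)]
      exact frobInner_le_sum_colNorm_mul_colNorm _ _
    have hsq : ∀ j, a j ^ 2 = gramEigenvalues X j := fun j => by
      rw [ha, Real.sq_sqrt (gramEigenvalues_nonneg X j)]
    rw [frobSq_sub]
    simp only [regR_eq_sum_sqrt_gramEigenvalues (fmu_zero hμ),
      frobSq_eq_sum_gramEigenvalues, ← ha, sum_add_distrib, sum_sub_distrib, ← mul_sum,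
      mul_assoc, hsq]
    linarith
  have hcol : ∀ j, -((if a j = 0 then 0 else θ - μ) + max (b j ^ 2 - θ) 0)
      ≤ fmu μ (a j) + a j ^ 2 - 2 * a j * b j := fun j =>
    neg_le_fmu_add_sq_sub_two_mul_mul hμ hθ (Real.sqrt_nonneg _)
  have hrank : ∑ j, (if a j = 0 then 0 else θ - μ) = X.rank * (θ - μ) := by
    simp only [ha, Real.sqrt_eq_zero (gramEigenvalues_nonneg X _)]
    rw [sum_ite, sum_const_zero, zero_add, sum_const, card_gramEigenvalues_ne_zero, nsmul_eq_mul]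
  have hconvex : ConvexOn ℝ Set.univ fun x : ℝ => max (x - θ) 0 :=
    ((convexOn_id convex_univ).add_const (-θ)).sup (convexOn_const 0 convex_univ)
  have hmajor : ∑ j, max (b j ^ 2 - θ) 0 ≤ ∑ i, max (gramEigenvalues Z i - θ) 0 := by
    simpa only [hb] using sum_convexOn_colNormSq_mul_le hconvex Z hV
  have := sum_le_sum fun j (_ : j ∈ univ) => hcol j
  rw [sum_neg_distrib, sum_add_distrib, hrank] at this
  linarith

lemma exists_rank_le_card_regR_fmu_add_frobSq_sub_le {μ : ℝ} (hμ : 0 ≤ μ)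
    (Z : Matrix (Fin m) (Fin n) ℝ) (T : Finset (Fin n)) :
    ∃ Y : Matrix (Fin m) (Fin n) ℝ, Y.rank ≤ #T ∧
      regR (fmu μ) Y + frobSq (Y - Z) ≤ μ * #T + ∑ i ∈ univ \ T, gramEigenvalues Z i := by
  obtain ⟨W, hW, hZW⟩ : ∃ W ∈ unitaryGroup (Fin n) ℝ,
      (Z * W)ᵀ * (Z * W) = diagonal (gramEigenvalues Z) :=
    ⟨_, gramEigenvectors_mem_unitaryGroup Z, transpose_mul_self_mul_gramEigenvectors Z⟩
  set χ : Fin n → ℝ := fun i => if i ∈ T then 1 else 0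
  have hrank : (Z * W * diagonal χ * Wᵀ).rank ≤ #T :=
    calc (Z * W * diagonal χ * Wᵀ).rank ≤ (diagonal χ).rank :=
          (rank_mul_le_left _ _).trans (rank_mul_le_right _ _)
      _ = #T := by
          rw [rank_diagonal, Fintype.card_subtype]
          congr 1
          ext i
          simp [χ]
  refine ⟨Z * W * diagonal χ * Wᵀ, hrank, ?_⟩
  have hreg : regR (fmu μ) (Z * W * diagonal χ * Wᵀ) ≤ μ * #T :=
    (regR_le_mul_rank (fmu_zero hμ) (fmu_le μ) _).trans
      (mul_le_mul_of_nonneg_left (by exact_mod_cast hrank) hμ)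
  have hsub : Z * W * diagonal χ * Wᵀ - Z = Z * W * diagonal (χ - 1) * Wᵀ := by
    calc Z * W * diagonal χ * Wᵀ - Z = Z * W * diagonal χ * Wᵀ - Z * W * Wᵀ := by
          rw [Matrix.mul_assoc Z W Wᵀ, mul_transpose_self_of_mem_unitaryGroup hW, Matrix.mul_one]
      _ = Z * W * diagonal (χ - 1) * Wᵀ := by
          rw [Pi.sub_def, ← diagonal_sub, diagonal_one', Matrix.mul_sub, Matrix.sub_mul,
            Matrix.mul_one]
  have hWt : Wᵀ * Wᵀᵀ = 1 := by
    rw [transpose_transpose, transpose_mul_self_of_mem_unitaryGroup hW]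
  have hdist : frobSq (Z * W * diagonal χ * Wᵀ - Z) = ∑ i ∈ univ \ T, gramEigenvalues Z i := by
    rw [hsub, frobSq, ← frobInner, frobInner_mul_mul hWt, frobInner, ← frobSq,
      frobSq_eq_sum_colNormSq]
    simp only [colNormSq_mul_of_transpose_mul_self_eq_diagonal hZW]
    simp only [diagonal_apply, ite_pow, ite_mul, ne_eq, OfNat.ofNat_ne_zero,
      not_false_eq_true, zero_pow, zero_mul, sum_ite_eq', mem_univ, if_true]
    rw [← sum_filter_add_sum_filter_not univ (· ∈ T), sum_eq_zero (by simp +contextual [χ]),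
      zero_add, filter_not, filter_mem_eq_inter, univ_inter]
    exact sum_congr rfl fun x hx => by simp [χ, (mem_sdiff.1 hx).2]
  linarith

end Cost

lemma sum_sub_sum_max_sub_eq {ι : Type*} [Fintype ι] [DecidableEq ι] {w : ι → ℝ} {θ : ℝ}
    {T : Finset ι} (hT : ∀ i ∈ T, θ ≤ w i) (hTc : ∀ i ∉ T, w i ≤ θ) :
    ∑ i, w i - ∑ i, max (w i - θ) 0 = ∑ i ∈ univ \ T, w i + #T * θ := by
  have hmax : ∑ i, max (w i - θ) 0 = ∑ i ∈ T, (w i - θ) := by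
    rw [← sum_subset (subset_univ T) fun i _ hi => max_eq_right (by linarith [hTc i hi])]
    exact sum_congr rfl fun i hi => max_eq_left (by linarith [hT i hi])
  rw [hmax, sum_sub_distrib, sum_const, nsmul_eq_mul, ← sum_sdiff (subset_univ T)]
  ring

lemma exists_separating_finset_card_eq {n s : ℕ} (w : Fin n → ℝ) (μ : ℝ) (hs0 : 0 < s)
    (hs : s ≤ #{i | μ < w i}) :
    ∃ (T : Finset (Fin n)) (θ : ℝ), #T = s ∧ μ < θ ∧ (∀ i ∈ T, θ ≤ w i) ∧ ∀ i ∉ T, w i ≤ θ := by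
  have hsn : s ≤ n := hs.trans ((card_filter_le _ _).trans (by simp))
  set σ := Tuple.sort w
  have hmono : Monotone (w ∘ σ) := Tuple.monotone_sort w
  set p : Fin n := ⟨n - s, by omega⟩
  refine ⟨(Ici p).image σ, w (σ p), ?_, ?_, ?_, ?_⟩
  · rw [card_image_of_injective _ σ.injective, Fin.card_Ici]
    simp only [p]
    omega
  · by_contra! hle
    have hsub : ({i | μ < w i} : Finset (Fin n)) ⊆ (Ioi p).image σ := by
      intro x hx
      refine mem_image.2 ⟨σ.symm x, mem_Ioi.2 ?_, σ.apply_symm_apply x⟩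
      by_contra! hxp
      have := hmono hxp
      simp only [Function.comp, σ.apply_symm_apply] at this
      linarith [(mem_filter.1 hx).2]
    have := card_le_card hsub
    rw [card_image_of_injective _ σ.injective, Fin.card_Ioi] at this
    simp only [p] at this
    omega
  · intro i hi
    obtain ⟨q, hq, rfl⟩ := mem_image.1 hi
    exact hmono (mem_Ici.1 hq)
  · intro i hi
    have hip : σ.symm i < p := by
      by_contra! hc
      exact hi (mem_image.2 ⟨σ.symm i, mem_Ici.2 hc, σ.apply_symm_apply i⟩)
    simpa [σ.apply_symm_apply] using hmono hip.le

theorem low_rank_min_is_global_min_general {m n k : ℕ} (μ : ℝ) (hμ : 0 < μ)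
    (Z Xbar : Matrix (Fin m) (Fin n) ℝ)
    (hmin : ∀ X : Matrix (Fin m) (Fin n) ℝ, X.rank ≤ k →
      regR (fmu μ) Xbar + frobSq (Xbar - Z) ≤ regR (fmu μ) X + frobSq (X - Z))
    (hrank : Xbar.rank < k) :
    ∀ X : Matrix (Fin m) (Fin n) ℝ,
      regR (fmu μ) Xbar + frobSq (Xbar - Z) ≤ regR (fmu μ) X + frobSq (X - Z) := by
  intro X
  by_cases hfew : #{i | μ < gramEigenvalues Z i} ≤ Xbar.rank
  · obtain ⟨Y, hYrank, hY⟩ :=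
      exists_rank_le_card_regR_fmu_add_frobSq_sub_le hμ.le Z {i | μ < gramEigenvalues Z i}
    have hX := sum_sub_sub_le_regR_fmu_add_frobSq_sub hμ.le le_rfl Z X
    have hS := sum_sub_sum_max_sub_eq (w := gramEigenvalues Z) (θ := μ)
      (T := {i | μ < gramEigenvalues Z i}) (by simp +contextual [le_of_lt]) (by simp)
    linarith [hmin Y (by omega)]
  · obtain ⟨T, θ, hTcard, hμθ, hT, hTc⟩ :=
      exists_separating_finset_card_eq (gramEigenvalues Z) μ Xbar.rank.succ_pos (by omega)
    obtain ⟨Y, hYrank, hY⟩ := exists_rank_le_card_regR_fmu_add_frobSq_sub_le hμ.le Z T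
    have hXbar := sum_sub_sub_le_regR_fmu_add_frobSq_sub hμ.le hμθ.le Z Xbar
    have hT := sum_sub_sum_max_sub_eq hT hTc
    rw [hTcard, Nat.cast_succ] at hT hY
    linarith [hmin Y (by omega)]

/-- For `f = f_μ` and `C_Z(X) = R(X) + ‖X − Z‖_F²`: if `X̄` minimizes `C_Z`
over `{X : rank X ≤ k}` with `rank X̄ < k`, and no singular value of `Z` lies in
`[(1−δ)√μ, √μ/(1−δ)]` for some `δ ∈ [0,1)`, then `X̄` minimizes `C_Z` globally. -/
theorem low_rank_min_is_global_min {m n k : ℕ} (μ δ : ℝ) (hμ : 0 < μ)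
    (hδ0 : 0 ≤ δ) (hδ1 : δ < 1)
    (Z Xbar : Matrix (Fin m) (Fin n) ℝ)
    (hmin : ∀ X : Matrix (Fin m) (Fin n) ℝ, X.rank ≤ k →
      regR (fmu μ) Xbar + frobSq (Xbar - Z) ≤ regR (fmu μ) X + frobSq (X - Z))
    (hrank : Xbar.rank < k)
    (hgap : ∀ i, sVal Z i ∉ Set.Icc ((1 - δ) * Real.sqrt μ) (Real.sqrt μ / (1 - δ))) :
    ∀ X : Matrix (Fin m) (Fin n) ℝ,
      regR (fmu μ) Xbar + frobSq (Xbar - Z) ≤ regR (fmu μ) X + frobSq (X - Z) :=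
  low_rank_min_is_global_min_general μ hμ Z Xbar hmin hrank
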